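/- arXiv:2510.27368 — 2 statements merged into one kernel-verified Lean document; each statement's English description precedes it below -/
import Mathlib

section
/- Smooth geodesics in the interior: let m ≥ 1 and suppose f is m-times continuously differentiable on (0,1) with f' everywhere positive on (0,1). Then any two points P, Q ∈ Δ°_N can be connected by a forward geodesic of class C^m; i.e., there exists a C^m curve γ : [0,r] → Δ°_N with r = D_f(P,Q), γ(0) = P, γ(r) = Q, and D_f(γ(s),γ(t)) = t − s for all 0 ≤ s ≤ t ≤ r. -/
/-!
For `P ≠ Q` the quasimetric `r = D_f(P,Q)` is positive, because the coordinates of `P` and `Q`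
have the same sum. Write `g` for the inverse of `f` on `(0,1)`; it is `C^m` by the inverse
function theorem, since `f' > 0`. Each coordinate with `p_i ≤ q_i` follows
`g (f p_i + t (f q_i - f p_i) / r)`: in `f`-coordinates it moves affinely with speed
`(f q_i - f p_i) / r ≤ 1`, and with speed exactly `1` at a coordinate where the maximum defining
`r` is attained. The coordinates with `q_i < p_i` move from `p_i` to `q_i`, all by the same
fraction `μ(t)` of `p_i - q_i`, chosen so that the total mass stays `1`. They decrease, so
they never contribute to `D_f`, and therefore `D_f(γ s, γ t) = t - s`.
-/

/-- Membership in the interior Δ°_N of the probability simplex. -/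
def memInteriorSimplex {N : ℕ} (P : Fin (N + 1) → ℝ) : Prop :=
  (∀ i, P i ∈ Set.Ioo (0 : ℝ) 1) ∧ ∑ i, P i = 1

/-- The max-type quasimetric D_f(P,Q) = max_i (f(q_i) - f(p_i)). -/
noncomputable def Df {N : ℕ} (f : ℝ → ℝ) (P Q : Fin (N + 1) → ℝ) : ℝ :=
  ⨆ i, (f (Q i) - f (P i))

open Set Function Filter Topology

theorem ContDiffAt.to_local_left_inverse {𝕂 : Type*} [RCLike 𝕂] {f g : 𝕂 → 𝕂} {a : 𝕂}
    {n : WithTop ℕ∞} (hf : ContDiffAt 𝕂 n f a) (hn : n ≠ 0) (hf' : deriv f a ≠ 0)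
    (hg : ∀ᶠ x in 𝓝 a, g (f x) = x) : ContDiffAt 𝕂 n g (f a) := by
  have hfe := (hf.differentiableAt hn).hasDerivAt.hasFDerivAt_equiv hf'
  exact (hf.to_localInverse hfe hn).congr_of_eventuallyEq
    ((hf.hasStrictFDerivAt' hfe hn).localInverse_unique hg)

theorem Set.BijOn.contDiffOn_invFunOn {𝕂 : Type*} [RCLike 𝕂] {f : 𝕂 → 𝕂} {s t : Set 𝕂}
    {n : WithTop ℕ∞} (hbij : BijOn f s t) (hs : IsOpen s) (hf : ContDiffOn 𝕂 n f s) (hn : n ≠ 0)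
    (hf' : ∀ x ∈ s, deriv f x ≠ 0) : ContDiffOn 𝕂 n (invFunOn f s) t := by
  intro y hy
  obtain ⟨x, hx, rfl⟩ := hbij.surjOn hy
  have hleft : ∀ᶠ x' in 𝓝 x, invFunOn f s (f x') = x' :=
    eventually_of_mem (hs.mem_nhds hx) fun x' hx' => hbij.injOn.leftInvOn_invFunOn hx'
  exact ((hf.contDiffAt (hs.mem_nhds hx)).to_local_left_inverse hn (hf' x hx)
    hleft).contDiffWithinAt

theorem StrictMonoOn.monotoneOn_invFunOn {α β : Type*} [LinearOrder α] [Preorder β] [Nonempty α]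
    {f : α → β} {s : Set α} {t : Set β} (hf : StrictMonoOn f s)
    (hsurj : SurjOn f s t) : MonotoneOn (invFunOn f s) t := by
  intro y₁ hy₁ y₂ hy₂ hy
  by_contra! hlt
  have := hf (hsurj.mapsTo_invFunOn hy₂) (hsurj.mapsTo_invFunOn hy₁) hlt
  rw [hsurj.rightInvOn_invFunOn hy₁, hsurj.rightInvOn_invFunOn hy₂] at this
  exact this.not_ge hy

theorem bijOn_Ioo_of_strictMonoOn {f : ℝ → ℝ} (hfc : ContinuousOn f (Icc 0 1))
    (hfm : StrictMonoOn f (Icc 0 1)) (hf0 : f 0 = 0) (hf1 : f 1 = 1) :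
    BijOn f (Ioo 0 1) (Ioo 0 1) := by
  have himage := hfc.image_Ioo_of_strictMonoOn zero_le_one hfm
  rw [hf0, hf1] at himage
  simpa only [himage] using (hfm.mono Ioo_subset_Icc_self).injOn.bijOn_image

theorem exists_lt_of_sum_eq_of_ne {ι M : Type*} [Fintype ι] [AddCommMonoid M] [LinearOrder M]
    [IsOrderedCancelAddMonoid M] {x y : ι → M} (hsum : ∑ i, x i = ∑ i, y i) (hne : x ≠ y) :
    ∃ i, x i < y i := by
  by_contra! hle
  refine hne (funext fun i => ?_)
  exact ((Finset.sum_eq_sum_iff_of_le fun i _ => hle i).1 hsum.symm i (Finset.mem_univ i)).symm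

variable {N : ℕ} {f : ℝ → ℝ} {P Q : Fin (N + 1) → ℝ}

theorem le_Df (i : Fin (N + 1)) : f (Q i) - f (P i) ≤ Df f P Q :=
  le_ciSup (f := fun j => f (Q j) - f (P j)) (Finite.bddAbove_range _) i

theorem exists_eq_Df : ∃ i, f (Q i) - f (P i) = Df f P Q :=
  exists_eq_ciSup_of_finite

@[simp]
theorem Df_self : Df f P P = 0 := by
  simp [Df]

theorem Df_eq_of_le {c : ℝ} (hle : ∀ i, f (Q i) - f (P i) ≤ c) {i : Fin (N + 1)}
    (hi : f (Q i) - f (P i) = c) : Df f P Q = c :=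
  le_antisymm (ciSup_le hle) (hi ▸ le_Df i)

theorem Df_pos {s : Set ℝ} (hf : StrictMonoOn f s) (hP : ∀ i, P i ∈ s) (hQ : ∀ i, Q i ∈ s)
    (hsum : ∑ i, P i = ∑ i, Q i) (hne : P ≠ Q) : 0 < Df f P Q := by
  obtain ⟨i, hi⟩ := exists_lt_of_sum_eq_of_ne hsum hne
  exact (sub_pos.2 (hf (hP i) (hQ i) hi)).trans_le (le_Df i)

theorem exists_lt_and_eq_Df {s : Set ℝ} (hf : MonotoneOn f s) (hP : ∀ i, P i ∈ s)
    (hQ : ∀ i, Q i ∈ s) (hr : 0 < Df f P Q) :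
    ∃ i, P i < Q i ∧ f (Q i) - f (P i) = Df f P Q := by
  obtain ⟨i, hi⟩ := exists_eq_Df (f := f) (P := P) (Q := Q)
  refine ⟨i, lt_of_not_ge fun hle => ?_, hi⟩
  linarith [hf (hQ i) (hP i) hle]

-- Coordinates with `f (Q i) ≤ f (P i)` get slope zero here; `geodesicPath` moves them instead.
variable (f P Q) in
noncomputable def risingLevel (t : ℝ) (i : Fin (N + 1)) : ℝ :=
  f (P i) + max (f (Q i) - f (P i)) 0 * (t / Df f P Q)

variable (f P Q) in
noncomputable def risingPath (t : ℝ) : Fin (N + 1) → ℝ :=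
  fun i => invFunOn f (Ioo 0 1) (risingLevel f P Q t i)

@[simp]
theorem risingLevel_zero (i : Fin (N + 1)) : risingLevel f P Q 0 i = f (P i) := by
  simp [risingLevel]

theorem risingLevel_Df (hr : Df f P Q ≠ 0) (i : Fin (N + 1)) :
    risingLevel f P Q (Df f P Q) i = max (f (P i)) (f (Q i)) := by
  rw [risingLevel, div_self hr, mul_one, add_comm, ← max_add_add_right]
  simp [max_comm]

theorem risingLevel_sub (s t : ℝ) (i : Fin (N + 1)) :
    risingLevel f P Q t i - risingLevel f P Q s i =
      max (f (Q i) - f (P i)) 0 / Df f P Q * (t - s) := by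
  simp only [risingLevel]
  ring

theorem risingLevel_of_le {i : Fin (N + 1)} (h : f (Q i) ≤ f (P i)) (t : ℝ) :
    risingLevel f P Q t i = f (P i) := by
  simp [risingLevel, h]

theorem monotone_risingLevel (hr : 0 ≤ Df f P Q) (i : Fin (N + 1)) :
    Monotone (risingLevel f P Q · i) := fun s t hst => by
  have := risingLevel_sub (f := f) (P := P) (Q := Q) s t i
  have : 0 ≤ max (f (Q i) - f (P i)) 0 / Df f P Q * (t - s) :=
    mul_nonneg (div_nonneg (le_max_right _ _) hr) (sub_nonneg.2 hst)
  linarith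

theorem risingLevel_mem_Icc (hr : 0 < Df f P Q) {t : ℝ} (ht : t ∈ Icc 0 (Df f P Q))
    (i : Fin (N + 1)) : risingLevel f P Q t i ∈ Icc (f (P i)) (max (f (P i)) (f (Q i))) := by
  have hmono := monotone_risingLevel hr.le i
  exact ⟨by simpa using hmono ht.1, by simpa [risingLevel_Df hr.ne'] using hmono ht.2⟩

theorem risingLevel_mem_Ioo (hf : MapsTo f (Ioo 0 1) (Ioo 0 1)) (hP : ∀ i, P i ∈ Ioo 0 1)
    (hQ : ∀ i, Q i ∈ Ioo 0 1) (hr : 0 < Df f P Q) {t : ℝ} (ht : t ∈ Icc 0 (Df f P Q))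
    (i : Fin (N + 1)) : risingLevel f P Q t i ∈ Ioo 0 1 :=
  ordConnected_Ioo.out (hf (hP i)) (max_rec' _ (hf (hP i)) (hf (hQ i)))
    (risingLevel_mem_Icc hr ht i)

theorem f_risingPath (hf : BijOn f (Ioo 0 1) (Ioo 0 1)) (hP : ∀ i, P i ∈ Ioo 0 1)
    (hQ : ∀ i, Q i ∈ Ioo 0 1) (hr : 0 < Df f P Q) {t : ℝ} (ht : t ∈ Icc 0 (Df f P Q))
    (i : Fin (N + 1)) : f (risingPath f P Q t i) = risingLevel f P Q t i :=
  hf.surjOn.rightInvOn_invFunOn (risingLevel_mem_Ioo hf.mapsTo hP hQ hr ht i)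

theorem risingPath_zero (hf : InjOn f (Ioo 0 1)) (hP : ∀ i, P i ∈ Ioo 0 1) :
    risingPath f P Q 0 = P :=
  funext fun i => by simp [risingPath, hf.leftInvOn_invFunOn (hP i)]

theorem risingPath_Df (hf : StrictMonoOn f (Ioo 0 1)) (hP : ∀ i, P i ∈ Ioo 0 1)
    (hQ : ∀ i, Q i ∈ Ioo 0 1) (hr : Df f P Q ≠ 0) (i : Fin (N + 1)) :
    risingPath f P Q (Df f P Q) i = max (P i) (Q i) := by
  rw [risingPath, risingLevel_Df hr, ← hf.monotoneOn.map_max (hP i) (hQ i)]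
  exact hf.injOn.leftInvOn_invFunOn (max_rec' _ (hP i) (hQ i))

theorem risingPath_of_le (hf : StrictMonoOn f (Ioo 0 1)) (hP : ∀ i, P i ∈ Ioo 0 1)
    (hQ : ∀ i, Q i ∈ Ioo 0 1) {i : Fin (N + 1)} (h : Q i ≤ P i) (t : ℝ) :
    risingPath f P Q t i = P i := by
  rw [risingPath, risingLevel_of_le (hf.monotoneOn (hQ i) (hP i) h)]
  exact hf.injOn.leftInvOn_invFunOn (hP i)

theorem monotoneOn_risingPath (hf : StrictMonoOn f (Ioo 0 1))
    (hbij : BijOn f (Ioo 0 1) (Ioo 0 1)) (hP : ∀ i, P i ∈ Ioo 0 1) (hQ : ∀ i, Q i ∈ Ioo 0 1)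
    (hr : 0 < Df f P Q) (i : Fin (N + 1)) :
    MonotoneOn (risingPath f P Q · i) (Icc 0 (Df f P Q)) :=
  (hf.monotoneOn_invFunOn hbij.surjOn).comp ((monotone_risingLevel hr.le i).monotoneOn _)
    fun _ ht => risingLevel_mem_Ioo hbij.mapsTo hP hQ hr ht i

theorem risingPath_mem_Icc (hf : StrictMonoOn f (Ioo 0 1))
    (hbij : BijOn f (Ioo 0 1) (Ioo 0 1)) (hP : ∀ i, P i ∈ Ioo 0 1) (hQ : ∀ i, Q i ∈ Ioo 0 1)
    (hr : 0 < Df f P Q) {t : ℝ} (ht : t ∈ Icc 0 (Df f P Q)) (i : Fin (N + 1)) :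
    risingPath f P Q t i ∈ Icc (P i) (max (P i) (Q i)) := by
  have hmono := monotoneOn_risingPath hf hbij hP hQ hr i
  constructor
  · simpa [risingPath_zero hbij.injOn hP] using hmono ⟨le_rfl, hr.le⟩ ht ht.1
  · simpa [risingPath_Df hf hP hQ hr.ne'] using hmono ht ⟨hr.le, le_rfl⟩ ht.2

theorem contDiffOn_risingPath {n : WithTop ℕ∞}
    (hg : ContDiffOn ℝ n (invFunOn f (Ioo 0 1)) (Ioo 0 1)) (hf : MapsTo f (Ioo 0 1) (Ioo 0 1))
    (hP : ∀ i, P i ∈ Ioo 0 1) (hQ : ∀ i, Q i ∈ Ioo 0 1) (hr : 0 < Df f P Q) :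
    ContDiffOn ℝ n (risingPath f P Q) (Icc 0 (Df f P Q)) :=
  contDiffOn_pi.2 fun i =>
    hg.comp (by unfold risingLevel; fun_prop : ContDiff ℝ n (risingLevel f P Q · i)).contDiffOn
      fun _ ht => risingLevel_mem_Ioo hf hP hQ hr ht i

-- The mass of `risingPath` in excess of `1`, normalised to reach `1` at time `Df f P Q`.
variable (f P Q) in
noncomputable def descentFraction (t : ℝ) : ℝ :=
  (∑ i, risingPath f P Q t i - 1) / (∑ i, max (P i) (Q i) - 1)

variable (f P Q) in
noncomputable def geodesicPath (t : ℝ) : Fin (N + 1) → ℝ :=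
  fun i => risingPath f P Q t i - descentFraction f P Q t * (max (P i) (Q i) - Q i)

theorem one_lt_sum_max (hP : memInteriorSimplex P) (hQ : ∀ i, Q i ∈ Ioo 0 1)
    (hf : StrictMonoOn f (Ioo 0 1)) (hr : 0 < Df f P Q) : 1 < ∑ i, max (P i) (Q i) := by
  obtain ⟨i, hi, -⟩ := exists_lt_and_eq_Df hf.monotoneOn hP.1 hQ hr
  rw [← hP.2]
  exact Finset.sum_lt_sum (fun j _ => le_max_left _ _)
    ⟨i, Finset.mem_univ i, lt_max_of_lt_right hi⟩

theorem descentFraction_zero (hf : InjOn f (Ioo 0 1)) (hP : memInteriorSimplex P) :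
    descentFraction f P Q 0 = 0 := by
  simp [descentFraction, risingPath_zero hf hP.1, hP.2]

theorem descentFraction_Df (hf : StrictMonoOn f (Ioo 0 1)) (hP : memInteriorSimplex P)
    (hQ : ∀ i, Q i ∈ Ioo 0 1) (hr : 0 < Df f P Q) : descentFraction f P Q (Df f P Q) = 1 := by
  rw [descentFraction, Finset.sum_congr rfl fun i _ => risingPath_Df hf hP.1 hQ hr.ne' i]
  exact div_self (sub_pos.2 (one_lt_sum_max hP hQ hf hr)).ne'

theorem monotoneOn_descentFraction (hf : StrictMonoOn f (Ioo 0 1))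
    (hbij : BijOn f (Ioo 0 1) (Ioo 0 1)) (hP : memInteriorSimplex P) (hQ : ∀ i, Q i ∈ Ioo 0 1)
    (hr : 0 < Df f P Q) : MonotoneOn (descentFraction f P Q) (Icc 0 (Df f P Q)) :=
  fun _ hs _ ht hst => div_le_div_of_nonneg_right
    (sub_le_sub_right (Finset.sum_le_sum fun i _ =>
      monotoneOn_risingPath hf hbij hP.1 hQ hr i hs ht hst) 1)
    (sub_pos.2 (one_lt_sum_max hP hQ hf hr)).le

theorem descentFraction_mem_Icc (hf : StrictMonoOn f (Ioo 0 1))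
    (hbij : BijOn f (Ioo 0 1) (Ioo 0 1)) (hP : memInteriorSimplex P) (hQ : ∀ i, Q i ∈ Ioo 0 1)
    (hr : 0 < Df f P Q) {t : ℝ} (ht : t ∈ Icc 0 (Df f P Q)) :
    descentFraction f P Q t ∈ Icc 0 1 := by
  have hmono := monotoneOn_descentFraction hf hbij hP hQ hr
  constructor
  · simpa [descentFraction_zero hbij.injOn hP] using hmono ⟨le_rfl, hr.le⟩ ht ht.1
  · simpa [descentFraction_Df hf hP hQ hr] using hmono ht ⟨hr.le, le_rfl⟩ ht.2

theorem geodesicPath_of_le {i : Fin (N + 1)} (h : P i ≤ Q i) (t : ℝ) :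
    geodesicPath f P Q t i = risingPath f P Q t i := by
  simp [geodesicPath, max_eq_right h]

theorem geodesicPath_of_lt (hf : StrictMonoOn f (Ioo 0 1)) (hP : ∀ i, P i ∈ Ioo 0 1)
    (hQ : ∀ i, Q i ∈ Ioo 0 1) {i : Fin (N + 1)} (h : Q i < P i) (t : ℝ) :
    geodesicPath f P Q t i = P i - descentFraction f P Q t * (P i - Q i) := by
  rw [geodesicPath, risingPath_of_le hf hP hQ h.le, max_eq_left h.le]

theorem geodesicPath_zero (hf : InjOn f (Ioo 0 1)) (hP : memInteriorSimplex P) :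
    geodesicPath f P Q 0 = P :=
  funext fun i => by simp [geodesicPath, descentFraction_zero hf hP, risingPath_zero hf hP.1]

theorem geodesicPath_Df (hf : StrictMonoOn f (Ioo 0 1)) (hP : memInteriorSimplex P)
    (hQ : ∀ i, Q i ∈ Ioo 0 1) (hr : 0 < Df f P Q) : geodesicPath f P Q (Df f P Q) = Q :=
  funext fun i => by
    simp [geodesicPath, descentFraction_Df hf hP hQ hr, risingPath_Df hf hP.1 hQ hr.ne']

theorem sum_geodesicPath (hf : StrictMonoOn f (Ioo 0 1)) (hP : memInteriorSimplex P)
    (hQ : memInteriorSimplex Q) (hr : 0 < Df f P Q) (t : ℝ) :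
    ∑ i, geodesicPath f P Q t i = 1 := by
  have hden := (sub_pos.2 (one_lt_sum_max hP hQ.1 hf hr)).ne'
  simp only [geodesicPath, Finset.sum_sub_distrib, ← Finset.mul_sum, hQ.2, descentFraction]
  rw [div_mul_cancel₀ _ hden]
  ring

theorem geodesicPath_mem_uIcc (hf : StrictMonoOn f (Ioo 0 1))
    (hbij : BijOn f (Ioo 0 1) (Ioo 0 1)) (hP : memInteriorSimplex P) (hQ : ∀ i, Q i ∈ Ioo 0 1)
    (hr : 0 < Df f P Q) {t : ℝ} (ht : t ∈ Icc 0 (Df f P Q)) (i : Fin (N + 1)) :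
    geodesicPath f P Q t i ∈ uIcc (P i) (Q i) := by
  rcases le_or_gt (P i) (Q i) with h | h
  · rw [geodesicPath_of_le h]
    simpa [max_eq_right h] using
      Icc_subset_uIcc (risingPath_mem_Icc hf hbij hP.1 hQ hr ht i)
  · rw [geodesicPath_of_lt hf hP.1 hQ h]
    obtain ⟨hμ₀, hμ₁⟩ := descentFraction_mem_Icc hf hbij hP hQ hr ht
    exact Icc_subset_uIcc' ⟨by nlinarith, by nlinarith⟩

theorem memInteriorSimplex_geodesicPath (hf : StrictMonoOn f (Ioo 0 1))
    (hbij : BijOn f (Ioo 0 1) (Ioo 0 1)) (hP : memInteriorSimplex P)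
    (hQ : memInteriorSimplex Q) (hr : 0 < Df f P Q) {t : ℝ} (ht : t ∈ Icc 0 (Df f P Q)) :
    memInteriorSimplex (geodesicPath f P Q t) :=
  ⟨fun i => ordConnected_Ioo.uIcc_subset (hP.1 i) (hQ.1 i)
    (geodesicPath_mem_uIcc hf hbij hP hQ.1 hr ht i), sum_geodesicPath hf hP hQ hr t⟩

theorem contDiffOn_geodesicPath {n : WithTop ℕ∞}
    (hg : ContDiffOn ℝ n (invFunOn f (Ioo 0 1)) (Ioo 0 1)) (hf : MapsTo f (Ioo 0 1) (Ioo 0 1))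
    (hP : ∀ i, P i ∈ Ioo 0 1) (hQ : ∀ i, Q i ∈ Ioo 0 1) (hr : 0 < Df f P Q) :
    ContDiffOn ℝ n (geodesicPath f P Q) (Icc 0 (Df f P Q)) := by
  have hrising := contDiffOn_pi.1 (contDiffOn_risingPath hg hf hP hQ hr)
  have hdescent : ContDiffOn ℝ n (descentFraction f P Q) (Icc 0 (Df f P Q)) :=
    ((ContDiffOn.sum fun i _ => hrising i).sub contDiffOn_const).div_const _
  exact contDiffOn_pi.2 fun i => (hrising i).sub (hdescent.mul contDiffOn_const)

theorem f_geodesicPath_sub_le (hf : StrictMonoOn f (Ioo 0 1))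
    (hbij : BijOn f (Ioo 0 1) (Ioo 0 1)) (hP : memInteriorSimplex P) (hQ : ∀ i, Q i ∈ Ioo 0 1)
    (hr : 0 < Df f P Q) {s t : ℝ} (hs : s ∈ Icc 0 (Df f P Q)) (ht : t ∈ Icc 0 (Df f P Q))
    (hst : s ≤ t) (i : Fin (N + 1)) :
    f (geodesicPath f P Q t i) - f (geodesicPath f P Q s i) ≤ t - s := by
  rcases le_or_gt (P i) (Q i) with h | h
  · rw [geodesicPath_of_le h, geodesicPath_of_le h, f_risingPath hbij hP.1 hQ hr ht,
      f_risingPath hbij hP.1 hQ hr hs, risingLevel_sub]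
    have hslope : max (f (Q i) - f (P i)) 0 / Df f P Q ≤ 1 :=
      div_le_one_of_le₀ (max_le (le_Df i) hr.le) hr.le
    nlinarith
  · have hmem (u) (hu : u ∈ Icc 0 (Df f P Q)) : geodesicPath f P Q u i ∈ Ioo 0 1 :=
      ordConnected_Ioo.uIcc_subset (hP.1 i) (hQ i) (geodesicPath_mem_uIcc hf hbij hP hQ hr hu i)
    have hanti : geodesicPath f P Q t i ≤ geodesicPath f P Q s i := by
      rw [geodesicPath_of_lt hf hP.1 hQ h, geodesicPath_of_lt hf hP.1 hQ h]
      nlinarith [monotoneOn_descentFraction hf hbij hP hQ hr hs ht hst]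
    linarith [hf.monotoneOn (hmem t ht) (hmem s hs) hanti]

theorem f_geodesicPath_sub_eq (hbij : BijOn f (Ioo 0 1) (Ioo 0 1)) (hP : ∀ i, P i ∈ Ioo 0 1)
    (hQ : ∀ i, Q i ∈ Ioo 0 1) (hr : 0 < Df f P Q) {s t : ℝ} (hs : s ∈ Icc 0 (Df f P Q))
    (ht : t ∈ Icc 0 (Df f P Q)) {i : Fin (N + 1)} (hi : P i < Q i)
    (hmax : f (Q i) - f (P i) = Df f P Q) :
    f (geodesicPath f P Q t i) - f (geodesicPath f P Q s i) = t - s := by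
  rw [geodesicPath_of_le hi.le, geodesicPath_of_le hi.le, f_risingPath hbij hP hQ hr ht,
    f_risingPath hbij hP hQ hr hs, risingLevel_sub, hmax, max_eq_left hr.le, div_self hr.ne',
    one_mul]

theorem Df_geodesicPath (hf : StrictMonoOn f (Ioo 0 1))
    (hbij : BijOn f (Ioo 0 1) (Ioo 0 1)) (hP : memInteriorSimplex P) (hQ : ∀ i, Q i ∈ Ioo 0 1)
    (hr : 0 < Df f P Q) {s t : ℝ} (hs : 0 ≤ s) (hst : s ≤ t) (ht : t ≤ Df f P Q) :
    Df f (geodesicPath f P Q s) (geodesicPath f P Q t) = t - s := by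
  obtain ⟨i, hi, hmax⟩ := exists_lt_and_eq_Df hf.monotoneOn hP.1 hQ hr
  have hsI : s ∈ Icc 0 (Df f P Q) := ⟨hs, hst.trans ht⟩
  have htI : t ∈ Icc 0 (Df f P Q) := ⟨hs.trans hst, ht⟩
  exact Df_eq_of_le (f_geodesicPath_sub_le hf hbij hP hQ hr hsI htI hst)
    (f_geodesicPath_sub_eq hbij hP.1 hQ hr hsI htI hi hmax)

/-- smooth geodesics in the interior: if m ≥ 1, f is C^m on (0,1)
with f' > 0 there, then any P,Q ∈ Δ°_N are joined by a C^m forward geodesic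
γ : [0,r] → Δ°_N with r = D_f(P,Q). -/
theorem stmt_16 {N : ℕ} (f : ℝ → ℝ) (m : ℕ) (hm : 1 ≤ m)
    (hfc : ContinuousOn f (Set.Icc 0 1))
    (hfm : StrictMonoOn f (Set.Icc 0 1))
    (hf0 : f 0 = 0) (hf1 : f 1 = 1)
    (hfsmooth : ContDiffOn ℝ m f (Set.Ioo 0 1))
    (hf'pos : ∀ x ∈ Set.Ioo (0 : ℝ) 1, 0 < deriv f x)
    (P Q : Fin (N + 1) → ℝ)
    (hP : memInteriorSimplex P) (hQ : memInteriorSimplex Q) :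
    ∃ γ : ℝ → Fin (N + 1) → ℝ,
      ContDiffOn ℝ m γ (Set.Icc 0 (Df f P Q)) ∧
      γ 0 = P ∧ γ (Df f P Q) = Q ∧
      (∀ t ∈ Set.Icc (0 : ℝ) (Df f P Q), memInteriorSimplex (γ t)) ∧
      (∀ s t : ℝ, 0 ≤ s → s ≤ t → t ≤ Df f P Q → Df f (γ s) (γ t) = t - s) := by
  by_cases hPQ : P = Q
  · subst hPQ
    refine ⟨fun _ => P, contDiffOn_const, rfl, rfl, fun _ _ => hP, fun s t hs hst ht => ?_⟩
    rw [Df_self] at ht ⊢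
    linarith
  have hf := hfm.mono Ioo_subset_Icc_self
  have hbij := bijOn_Ioo_of_strictMonoOn hfc hfm hf0 hf1
  have hr := Df_pos hf hP.1 hQ.1 (hP.2.trans hQ.2.symm) hPQ
  have hg := hbij.contDiffOn_invFunOn isOpen_Ioo hfsmooth (by exact_mod_cast (by omega : m ≠ 0))
    fun x hx => (hf'pos x hx).ne'
  exact ⟨geodesicPath f P Q, contDiffOn_geodesicPath hg hbij.mapsTo hP.1 hQ.1 hr,
    geodesicPath_zero hbij.injOn hP, geodesicPath_Df hf hP hQ.1 hr,
    fun t ht => memInteriorSimplex_geodesicPath hf hbij hP hQ hr ht,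
    fun s t hs hst ht => Df_geodesicPath hf hbij hP hQ.1 hr hs hst ht⟩
end

section
/- Monotonicity of D_f under bistochastic maps: suppose f is continuously differentiable on (0,1), with f' positive and 1/f' concave on (0,1). Then for every (N+1)×(N+1) bistochastic matrix S (S_{ij} ≥ 0, all row sums and column sums equal 1) and all P, Q ∈ Δ_N, D_f(SP, SQ) ≤ D_f(P, Q). -/
/-!
Fix a row `w` of `S` and let `c := D_f(P, Q)`, which is `≥ 0` because `P` and `Q` have the same
total mass. With `g = f⁻¹`, move `u_j = f(p_j)` linearly to `v_j = f(q_j)` and follow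
`m(t) = ∑ⱼ w_j g((1 - t) u_j + t v_j)`, which runs from `(SP)_i` to `(SQ)_i`. Since
`g' = H ∘ g` with `H = 1 / f'`, the speed of `f ∘ m` is
`f'(m) ∑ⱼ w_j (v_j - u_j) H(g(…)) ≤ c f'(m) ∑ⱼ w_j H(g(…)) ≤ c f'(m) H(m) = c`
by Jensen's inequality for the concave `H`, extended by `0` to `[0, 1]` (it stays concave because
it is nonnegative). Hence `f((SQ)_i) - f((SP)_i) ≤ c`.
-/

/-- Membership in the probability simplex Δ_N ⊂ ℝ^{N+1}. -/
def memSimplex {N : ℕ} (P : Fin (N + 1) → ℝ) : Prop :=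
  (∀ i, P i ∈ Set.Icc (0 : ℝ) 1) ∧ ∑ i, P i = 1

open Set Filter Topology

theorem ConcaveOn.mul_le_apply_add_smul {E : Type*} [AddCommGroup E] [Module ℝ E] {s : Set E}
    {k : E → ℝ} (hk : ConcaveOn ℝ s k) (hk0 : ∀ y ∈ s, 0 ≤ k y) {e v : E}
    (hs : ∀ ε ∈ Ioc (0 : ℝ) 1, e + ε • v ∈ s) {t : ℝ} (ht : t ∈ Ioc (0 : ℝ) 1) :
    t * k (e + v) ≤ k (e + t • v) := by
  have hv : e + v ∈ s := by simpa using hs 1 ⟨one_pos, le_rfl⟩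
  -- `e + t • v` lies on the segment from `e + ε • v` to `e + v` with weight `(t - ε) / (1 - ε)`
  -- on `e + v`; drop the nonnegative term at `e + ε • v` and let `ε → 0`.
  have hchord : ∀ ε ∈ Ioo (0 : ℝ) t, (t - ε) / (1 - ε) * k (e + v) ≤ k (e + t • v) := by
    intro ε hε
    have h1ε : 0 < 1 - ε := by linarith [ht.2, hε.2]
    have hε' : e + ε • v ∈ s := hs ε ⟨hε.1, by linarith [ht.2, hε.2]⟩
    set μ := (t - ε) / (1 - ε) with hμ
    have hμ0 : 0 ≤ μ := div_nonneg (by linarith [hε.2]) h1ε.le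
    have hμ1 : μ ≤ 1 := (div_le_one h1ε).2 (by linarith [ht.2])
    have hcomb : (1 - μ) • (e + ε • v) + μ • (e + v) = e + t • v := by
      have : ε + μ * (1 - ε) = t := by rw [hμ]; field_simp; ring
      rw [← this]; module
    have hconc := hk.2 hε' hv (sub_nonneg.2 hμ1) hμ0 (by ring)
    rw [hcomb, smul_eq_mul, smul_eq_mul] at hconc
    nlinarith [mul_nonneg (sub_nonneg.2 hμ1) (hk0 _ hε')]
  have hlim : Tendsto (fun ε => (t - ε) / (1 - ε) * k (e + v)) (𝓝[>] 0) (𝓝 (t * k (e + v))) := by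
    have : ContinuousAt (fun ε : ℝ => (t - ε) / (1 - ε) * k (e + v)) 0 := by
      fun_prop (disch := norm_num)
    simpa using this.tendsto.mono_left nhdsWithin_le_nhds
  refine le_of_tendsto hlim ?_
  filter_upwards [Ioo_mem_nhdsGT ht.1] with ε hε using hchord ε hε

theorem ConcaveOn.indicator_Ioo {a b : ℝ} {k : ℝ → ℝ} (hk : ConcaveOn ℝ (Ioo a b) k)
    (hk0 : ∀ x ∈ Ioo a b, 0 ≤ k x) : ConcaveOn ℝ (Icc a b) ((Ioo a b).indicator k) := by
  rw [concaveOn_iff_pairwise_pos]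
  refine ⟨convex_Icc a b, fun x hx y hy hxy α β hα hβ hαβ => ?_⟩
  wlog h : x < y generalizing x y α β
  · have := this y hy x hx hxy.symm β α hβ hα (by linarith) (lt_of_le_of_ne (not_lt.1 h) hxy.symm)
    rwa [add_comm, add_comm (β • y)] at this
  simp only [smul_eq_mul]
  have hz : α * x + β * y ∈ Ioo a b := by
    have hzx : α * x + β * y = x + β * (y - x) := by linear_combination x * hαβ
    have hzy : α * x + β * y = y - α * (y - x) := by linear_combination y * hαβ
    constructor <;> nlinarith [hx.1, hy.2, mul_pos hβ (sub_pos.2 h), mul_pos hα (sub_pos.2 h)]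
  rw [indicator_of_mem hz]
  rcases eq_left_or_mem_Ioo_of_mem_Ico ⟨hx.1, h.trans_le hy.2⟩ with rfl | hxI <;>
    rcases eq_right_or_mem_Ioo_of_mem_Ioc ⟨hx.1.trans_lt h, hy.2⟩ with rfl | hyI
  · simpa using hk0 _ hz
  · rw [indicator_of_notMem (by simp), indicator_of_mem hyI,
      show α * x + β * y = x + β • (y - x) by rw [smul_eq_mul]; linear_combination x * hαβ]
    have := hk.mul_le_apply_add_smul hk0 (e := x) (v := y - x) (t := β) (fun ε hε => by
      rw [smul_eq_mul]; constructor <;> nlinarith [hε.1, hε.2, hyI.2]) ⟨hβ, by linarith⟩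
    simpa using this
  · rw [indicator_of_mem hxI, indicator_of_notMem (by simp),
      show α * x + β * y = y + α • (x - y) by rw [smul_eq_mul]; linear_combination y * hαβ]
    have := hk.mul_le_apply_add_smul hk0 (e := y) (v := x - y) (t := α) (fun ε hε => by
      rw [smul_eq_mul]; constructor <;> nlinarith [hε.1, hε.2, hxI.1]) ⟨hα, by linarith⟩
    simpa using this
  · rw [indicator_of_mem hxI, indicator_of_mem hyI]
    exact hk.2 hxI hyI hα.le hβ.le hαβ

theorem StrictMonoOn.exists_continuous_invOn_Icc {f : ℝ → ℝ} {a b : ℝ} (hab : a ≤ b)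
    (hf : StrictMonoOn f (Icc a b)) (hfc : ContinuousOn f (Icc a b)) :
    ∃ g : ℝ → ℝ, Continuous g ∧ StrictMonoOn g (Icc (f a) (f b)) ∧
      InvOn g f (Icc a b) (Icc (f a) (f b)) := by
  have hmaps : MapsTo f (Icc a b) (Icc (f a) (f b)) := fun x hx =>
    ⟨hf.monotoneOn ⟨le_rfl, hab⟩ hx hx.1, hf.monotoneOn hx ⟨hab, le_rfl⟩ hx.2⟩
  have hφ : StrictMono hmaps.restrict := fun x y h => hf x.2 y.2 h
  have hsurj : Function.Surjective hmaps.restrict := by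
    rintro ⟨y, hy⟩
    obtain ⟨x, hx, rfl⟩ := intermediate_value_Icc hab hfc hy
    exact ⟨⟨x, hx⟩, rfl⟩
  set e := hφ.orderIsoOfSurjective _ hsurj
  refine ⟨IccExtend (hmaps ⟨le_rfl, hab⟩).2 (Subtype.val ∘ e.symm),
    continuous_IccExtend_iff.2 (continuous_subtype_val.comp e.symm.continuous), ?_, ?_, ?_⟩
  · intro y hy z hz h
    simp only [IccExtend_of_mem _ _ hy, IccExtend_of_mem _ _ hz, Function.comp_apply]
    exact e.symm.strictMono h
  · intro x hx
    rw [IccExtend_of_mem _ _ (hmaps hx)]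
    exact congrArg Subtype.val (e.symm_apply_apply ⟨x, hx⟩)
  · intro y hy
    rw [IccExtend_of_mem _ _ hy]
    exact congrArg Subtype.val (e.apply_symm_apply ⟨y, hy⟩)

theorem one_sub_mul_add_mul_mem_Icc {a b u v t : ℝ} (hu : u ∈ Icc a b) (hv : v ∈ Icc a b)
    (ht : t ∈ Icc (0 : ℝ) 1) : (1 - t) * u + t * v ∈ Icc a b :=
  convex_Icc a b hu hv (sub_nonneg.2 ht.2) ht.1 (sub_add_cancel 1 t)

theorem hasDerivAt_comp_one_sub_mul_add_mul {g g' : ℝ → ℝ} {a b u v t : ℝ}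
    (hg : ∀ y ∈ Ioo a b, HasDerivAt g (g' y) y) (hu : u ∈ Icc a b) (hv : v ∈ Icc a b)
    (ht : t ∈ Ioo (0 : ℝ) 1) :
    HasDerivAt (fun s => g ((1 - s) * u + s * v)) ((v - u) * g' ((1 - t) * u + t * v)) t := by
  rcases eq_or_ne u v with rfl | huv
  · have hconst : (fun s => g ((1 - s) * u + s * u)) = fun _ => g u := by
      funext s; ring_nf
    rw [hconst, sub_self, zero_mul]
    exact hasDerivAt_const t (g u)
  have hmem : (1 - t) * u + t * v ∈ Ioo a b := by
    rcases huv.lt_or_gt with h | h <;> constructor <;>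
      nlinarith [hu.1, hu.2, hv.1, hv.2, mul_pos ht.1 (sub_pos.2 h),
        mul_pos (sub_pos.2 ht.2) (sub_pos.2 h)]
  have hline : HasDerivAt (fun s => (1 - s) * u + s * v) (v - u) t :=
    ((((hasDerivAt_id' t).const_sub 1).mul_const u).add
      ((hasDerivAt_id' t).mul_const v)).congr_deriv (by ring)
  rw [mul_comm]
  exact (hg _ hmem).comp t hline

theorem sum_mul_pos_of_pos_imp {ι : Type*} {s : Finset ι} {w x y : ι → ℝ}
    (hw : ∀ j ∈ s, 0 ≤ w j) (hx : ∀ j ∈ s, 0 ≤ x j) (hxy : ∀ j ∈ s, 0 < y j → 0 < x j)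
    (hy : 0 < ∑ j ∈ s, w j * y j) : 0 < ∑ j ∈ s, w j * x j := by
  obtain ⟨j, hj, hwy⟩ : ∃ j ∈ s, 0 < w j * y j := by
    by_contra! h
    exact hy.not_ge (Finset.sum_nonpos h)
  have hyj : 0 < y j := pos_of_mul_pos_right hwy (hw j hj)
  have hwj : 0 < w j := pos_of_mul_pos_left hwy hyj.le
  exact Finset.sum_pos' (fun i hi => mul_nonneg (hw i hi) (hx i hi))
    ⟨j, hj, mul_pos hwj (hxy j hj hyj)⟩

theorem ConcaveOn.sum_mul_mul_le {ι : Type*} {s : Finset ι} {I : Set ℝ} {H : ℝ → ℝ}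
    (hH : ConcaveOn ℝ I H) (hH0 : ∀ x ∈ I, 0 ≤ H x) {w r d : ι → ℝ} {c : ℝ}
    (hw0 : ∀ j ∈ s, 0 ≤ w j) (hw1 : ∑ j ∈ s, w j = 1) (hr : ∀ j ∈ s, r j ∈ I) (hc : 0 ≤ c)
    (hd : ∀ j ∈ s, d j ≤ c) :
    ∑ j ∈ s, w j * (d j * H (r j)) ≤ c * H (∑ j ∈ s, w j * r j) :=
  calc ∑ j ∈ s, w j * (d j * H (r j)) ≤ ∑ j ∈ s, w j * (c * H (r j)) :=
        Finset.sum_le_sum fun j hj => mul_le_mul_of_nonneg_left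
          (mul_le_mul_of_nonneg_right (hd j hj) (hH0 _ (hr j hj))) (hw0 j hj)
    _ = c * ∑ j ∈ s, w j • H (r j) := by
        rw [Finset.mul_sum]; exact Finset.sum_congr rfl fun j _ => by rw [smul_eq_mul]; ring
    _ ≤ c * H (∑ j ∈ s, w j * r j) := mul_le_mul_of_nonneg_left (hH.le_map_sum hw0 hw1 hr) hc

section MixturePath

variable {ι : Type*} [Fintype ι]

noncomputable def mixturePath (g : ℝ → ℝ) (w u v : ι → ℝ) (t : ℝ) : ℝ :=
  ∑ j, w j * g ((1 - t) * u j + t * v j)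

variable {g : ℝ → ℝ} {w u v : ι → ℝ}

theorem mixturePath_zero : mixturePath g w u v 0 = ∑ j, w j * g (u j) := by
  simp [mixturePath]

theorem mixturePath_one : mixturePath g w u v 1 = ∑ j, w j * g (v j) := by
  simp [mixturePath]

theorem continuous_mixturePath (hg : Continuous g) : Continuous (mixturePath g w u v) := by
  unfold mixturePath; fun_prop

theorem mixturePath_mem_Icc (hg : MapsTo g (Icc 0 1) (Icc 0 1)) (hw0 : ∀ j, 0 ≤ w j)
    (hw1 : ∑ j, w j = 1) (hu : ∀ j, u j ∈ Icc (0 : ℝ) 1) (hv : ∀ j, v j ∈ Icc (0 : ℝ) 1) {t : ℝ}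
    (ht : t ∈ Icc (0 : ℝ) 1) : mixturePath g w u v t ∈ Icc 0 1 :=
  (convex_Icc (0 : ℝ) 1).sum_mem (fun j _ => hw0 j) hw1
    fun j _ => hg (one_sub_mul_add_mul_mem_Icc (hu j) (hv j) ht)

theorem mixturePath_mem_Ioo (hgm : StrictMonoOn g (Icc 0 1)) (hg0 : g 0 = 0) (hg1 : g 1 = 1)
    (hw0 : ∀ j, 0 ≤ w j) (hw1 : ∑ j, w j = 1) (hu : ∀ j, u j ∈ Icc (0 : ℝ) 1)
    (hv : ∀ j, v j ∈ Icc (0 : ℝ) 1) (h0 : 0 < mixturePath g w u v 1)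
    (h1 : mixturePath g w u v 0 < 1) {t : ℝ} (ht : t ∈ Ioo (0 : ℝ) 1) :
    mixturePath g w u v t ∈ Ioo 0 1 := by
  have h01 : (0 : ℝ) ∈ Icc 0 1 := left_mem_Icc.2 zero_le_one
  have h11 : (1 : ℝ) ∈ Icc 0 1 := right_mem_Icc.2 zero_le_one
  have hℓ : ∀ j, (1 - t) * u j + t * v j ∈ Icc (0 : ℝ) 1 := fun j =>
    one_sub_mul_add_mul_mem_Icc (hu j) (hv j) (Ioo_subset_Icc_self ht)
  have hgI : ∀ y ∈ Icc (0 : ℝ) 1, g y ∈ Icc 0 1 := fun y hy =>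
    ⟨hg0 ▸ hgm.monotoneOn h01 hy hy.1, hg1 ▸ hgm.monotoneOn hy h11 hy.2⟩
  have hpos : ∀ y ∈ Icc (0 : ℝ) 1, 0 < g y ↔ 0 < y := fun y hy => by
    simpa [hg0] using hgm.lt_iff_lt h01 hy
  have hlt : ∀ y ∈ Icc (0 : ℝ) 1, g y < 1 ↔ y < 1 := fun y hy => by
    simpa [hg1] using hgm.lt_iff_lt hy h11
  have hsum : ∀ x : ι → ℝ, ∑ j, w j * (1 - x j) = 1 - ∑ j, w j * x j := fun x => by
    simp [mul_sub, Finset.sum_sub_distrib, hw1]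
  rw [mixturePath_one] at h0
  rw [mixturePath_zero] at h1
  constructor
  · refine sum_mul_pos_of_pos_imp (fun j _ => hw0 j) (fun j _ => (hgI _ (hℓ j)).1)
      (fun j _ hj => ?_) h0
    rw [hpos _ (hv j)] at hj
    rw [hpos _ (hℓ j)]
    nlinarith [mul_nonneg (sub_nonneg.2 ht.2.le) (hu j).1, mul_pos ht.1 hj]
  · have := sum_mul_pos_of_pos_imp (x := fun j => 1 - g ((1 - t) * u j + t * v j))
      (y := fun j => 1 - g (u j)) (fun j _ => hw0 j) (fun j _ => sub_nonneg.2 (hgI _ (hℓ j)).2)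
      (fun j _ hj => ?_) (by rw [hsum]; linarith)
    · rw [hsum] at this
      exact sub_pos.1 this
    rw [sub_pos, hlt _ (hu j)] at hj
    rw [sub_pos, hlt _ (hℓ j)]
    nlinarith [mul_le_of_le_one_right ht.1.le (hv j).2, mul_lt_mul_of_pos_left hj (sub_pos.2 ht.2)]

theorem hasDerivAt_mixturePath {g' : ℝ → ℝ} (hg' : ∀ y ∈ Ioo (0 : ℝ) 1, HasDerivAt g (g' y) y)
    (hu : ∀ j, u j ∈ Icc (0 : ℝ) 1) (hv : ∀ j, v j ∈ Icc (0 : ℝ) 1) {t : ℝ}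
    (ht : t ∈ Ioo (0 : ℝ) 1) :
    HasDerivAt (mixturePath g w u v)
      (∑ j, w j * ((v j - u j) * g' ((1 - t) * u j + t * v j))) t :=
  HasDerivAt.fun_sum fun j _ =>
    (hasDerivAt_comp_one_sub_mul_add_mul hg' (hu j) (hv j) ht).const_mul (w j)

theorem apply_mixturePath_one_sub_apply_zero_le {f f' H : ℝ → ℝ} (hf : ContinuousOn f (Icc 0 1))
    (hfm : MonotoneOn f (Icc 0 1)) (hf' : ∀ x ∈ Ioo (0 : ℝ) 1, HasDerivAt f (f' x) x)
    (hH : ConcaveOn ℝ (Icc 0 1) H) (hH0 : ∀ x ∈ Icc (0 : ℝ) 1, 0 ≤ H x)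
    (hf'H : ∀ x ∈ Ioo (0 : ℝ) 1, f' x * H x = 1) (hg : Continuous g)
    (hgm : StrictMonoOn g (Icc 0 1)) (hg0 : g 0 = 0) (hg1 : g 1 = 1)
    (hg' : ∀ y ∈ Ioo (0 : ℝ) 1, HasDerivAt g (H (g y)) y) (hw0 : ∀ j, 0 ≤ w j)
    (hw1 : ∑ j, w j = 1) (hu : ∀ j, u j ∈ Icc (0 : ℝ) 1) (hv : ∀ j, v j ∈ Icc (0 : ℝ) 1)
    {c : ℝ} (hc : 0 ≤ c) (huv : ∀ j, v j - u j ≤ c) :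
    f (mixturePath g w u v 1) - f (mixturePath g w u v 0) ≤ c := by
  have h01 : (0 : ℝ) ∈ Icc 0 1 := left_mem_Icc.2 zero_le_one
  have h11 : (1 : ℝ) ∈ Icc 0 1 := right_mem_Icc.2 zero_le_one
  have hgI : MapsTo g (Icc 0 1) (Icc 0 1) := fun y hy =>
    ⟨hg0 ▸ hgm.monotoneOn h01 hy hy.1, hg1 ▸ hgm.monotoneOn hy h11 hy.2⟩
  set m := mixturePath g w u v
  have hmI : ∀ t ∈ Icc (0 : ℝ) 1, m t ∈ Icc 0 1 := fun t ht =>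
    mixturePath_mem_Icc hgI hw0 hw1 hu hv ht
  rcases (hmI 1 h11).1.eq_or_lt with h0 | h0
  · rw [← h0]
    linarith [hfm h01 (hmI 0 h01) (hmI 0 h01).1]
  rcases (hmI 0 h01).2.lt_or_eq with h1 | h1
  swap
  · rw [h1]
    linarith [hfm (hmI 1 h11) h11 (hmI 1 h11).2]
  have hmIoo : ∀ t ∈ Ioo (0 : ℝ) 1, m t ∈ Ioo 0 1 := fun t ht =>
    mixturePath_mem_Ioo hgm hg0 hg1 hw0 hw1 hu hv h0 h1 ht
  have hderiv : ∀ t ∈ Ioo (0 : ℝ) 1, HasDerivAt (f ∘ m)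
      (f' (m t) * ∑ j, w j * ((v j - u j) * H (g ((1 - t) * u j + t * v j)))) t :=
    fun t ht => (hf' _ (hmIoo t ht)).comp t (hasDerivAt_mixturePath hg' hu hv ht)
  have hbound : ∀ t ∈ Ioo (0 : ℝ) 1,
      f' (m t) * ∑ j, w j * ((v j - u j) * H (g ((1 - t) * u j + t * v j))) ≤ c := by
    intro t ht
    have hf'0 : 0 ≤ f' (m t) := by
      nlinarith [hf'H _ (hmIoo t ht), hH0 _ (Ioo_subset_Icc_self (hmIoo t ht))]
    calc _ ≤ f' (m t) * (c * H (m t)) := mul_le_mul_of_nonneg_left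
          (hH.sum_mul_mul_le hH0 (fun j _ => hw0 j) hw1
            (fun j _ => hgI (one_sub_mul_add_mul_mem_Icc (hu j) (hv j) (Ioo_subset_Icc_self ht)))
            hc fun j _ => huv j) hf'0
      _ = c := by rw [mul_left_comm, hf'H _ (hmIoo t ht), mul_one]
  have hint : interior (Icc (0 : ℝ) 1) = Ioo 0 1 := interior_Icc
  have hmvt := (convex_Icc (0 : ℝ) 1).image_sub_le_mul_sub_of_deriv_le
    (hf.comp (continuous_mixturePath hg).continuousOn hmI)
    (fun t ht => (hderiv t (hint ▸ ht)).differentiableAt.differentiableWithinAt)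
    (fun t ht => (hderiv t (hint ▸ ht)).deriv ▸ hbound t (hint ▸ ht))
    0 h01 1 h11 zero_le_one
  simpa using hmvt

end MixturePath

theorem apply_sum_mul_sub_apply_sum_mul_le {ι : Type*} [Fintype ι] {f f' : ℝ → ℝ}
    (hfc : ContinuousOn f (Icc 0 1)) (hfm : StrictMonoOn f (Icc 0 1)) (hf0 : f 0 = 0)
    (hf1 : f 1 = 1) (hderiv : ∀ x ∈ Ioo (0 : ℝ) 1, HasDerivAt f (f' x) x)
    (hf'pos : ∀ x ∈ Ioo (0 : ℝ) 1, 0 < f' x)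
    (hconc : ConcaveOn ℝ (Ioo (0 : ℝ) 1) (fun x => 1 / f' x)) {w p q : ι → ℝ}
    (hw0 : ∀ j, 0 ≤ w j) (hw1 : ∑ j, w j = 1) (hp : ∀ j, p j ∈ Icc (0 : ℝ) 1)
    (hq : ∀ j, q j ∈ Icc (0 : ℝ) 1) {c : ℝ} (hc : 0 ≤ c) (hpq : ∀ j, f (q j) - f (p j) ≤ c) :
    f (∑ j, w j * q j) - f (∑ j, w j * p j) ≤ c := by
  have h01 : (0 : ℝ) ∈ Icc 0 1 := left_mem_Icc.2 zero_le_one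
  have h11 : (1 : ℝ) ∈ Icc 0 1 := right_mem_Icc.2 zero_le_one
  obtain ⟨g, hg, hgm, hgf, hfg⟩ := hfm.exists_continuous_invOn_Icc zero_le_one hfc
  rw [hf0, hf1] at hgm hfg
  have hfI : MapsTo f (Icc 0 1) (Icc 0 1) := fun x hx =>
    ⟨hf0 ▸ hfm.monotoneOn h01 hx hx.1, hf1 ▸ hfm.monotoneOn hx h11 hx.2⟩
  have hg0 : g 0 = 0 := by simpa [hf0] using hgf h01
  have hg1 : g 1 = 1 := by simpa [hf1] using hgf h11
  set H := (Ioo (0 : ℝ) 1).indicator fun x => 1 / f' x with hH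
  have hf'H : ∀ x ∈ Ioo (0 : ℝ) 1, f' x * H x = 1 := fun x hx => by
    rw [hH, indicator_of_mem hx, mul_one_div_cancel (hf'pos x hx).ne']
  have hg' : ∀ y ∈ Ioo (0 : ℝ) 1, HasDerivAt g (H (g y)) y := by
    intro y hy
    have hgy : g y ∈ Ioo 0 1 := ⟨hg0 ▸ hgm h01 (Ioo_subset_Icc_self hy) hy.1,
      hg1 ▸ hgm (Ioo_subset_Icc_self hy) h11 hy.2⟩
    rw [hH, indicator_of_mem hgy, one_div]
    exact HasDerivAt.of_local_left_inverse hg.continuousAt (hderiv _ hgy) (hf'pos _ hgy).ne'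
      (eventually_of_mem (Icc_mem_nhds hy.1 hy.2) hfg)
  have key := apply_mixturePath_one_sub_apply_zero_le (u := f ∘ p) (v := f ∘ q) hfc
    hfm.monotoneOn hderiv (hconc.indicator_Ioo fun x hx => (one_div_pos.2 (hf'pos x hx)).le)
    (fun x _ => indicator_nonneg (fun x hx => (one_div_pos.2 (hf'pos x hx)).le) x) hf'H hg hgm
    hg0 hg1 hg' hw0 hw1 (fun j => hfI (hp j)) (fun j => hfI (hq j)) hc hpq
  have hsum : ∀ r : ι → ℝ, (∀ j, r j ∈ Icc (0 : ℝ) 1) →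
      ∑ j, w j * g ((f ∘ r) j) = ∑ j, w j * r j := fun r hr =>
    Finset.sum_congr rfl fun j _ => by rw [Function.comp_apply, hgf (hr j)]
  rwa [mixturePath_zero, mixturePath_one, hsum p hp, hsum q hq] at key

theorem sub_le_Df {N : ℕ} (f : ℝ → ℝ) (P Q : Fin (N + 1) → ℝ) (i : Fin (N + 1)) :
    f (Q i) - f (P i) ≤ Df f P Q :=
  le_ciSup (f := fun i => f (Q i) - f (P i)) (Set.finite_range _).bddAbove i

theorem Df_nonneg {N : ℕ} {f : ℝ → ℝ} (hf : MonotoneOn f (Icc 0 1)) {P Q : Fin (N + 1) → ℝ}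
    (hP : memSimplex P) (hQ : memSimplex Q) : 0 ≤ Df f P Q := by
  obtain ⟨i, -, hi⟩ := Finset.exists_le_of_sum_le Finset.univ_nonempty (hP.2.trans hQ.2.symm).le
  exact (sub_nonneg.2 (hf (hP.1 i) (hQ.1 i) hi)).trans (sub_le_Df f P Q i)

theorem stmt_19_general {N : ℕ} (f f' : ℝ → ℝ)
    (hfc : ContinuousOn f (Set.Icc 0 1))
    (hfm : StrictMonoOn f (Set.Icc 0 1))
    (hf0 : f 0 = 0) (hf1 : f 1 = 1)
    (hderiv : ∀ x ∈ Set.Ioo (0 : ℝ) 1, HasDerivAt f (f' x) x)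
    (hf'pos : ∀ x ∈ Set.Ioo (0 : ℝ) 1, 0 < f' x)
    (hconc : ConcaveOn ℝ (Set.Ioo (0 : ℝ) 1) (fun x => 1 / f' x))
    (S : Matrix (Fin (N + 1)) (Fin (N + 1)) ℝ)
    (hS0 : ∀ i j, 0 ≤ S i j)
    (hSrow : ∀ i, ∑ j, S i j = 1)
    (P Q : Fin (N + 1) → ℝ) (hP : memSimplex P) (hQ : memSimplex Q) :
    Df f (S.mulVec P) (S.mulVec Q) ≤ Df f P Q :=
  ciSup_le fun i =>
    apply_sum_mul_sub_apply_sum_mul_le hfc hfm hf0 hf1 hderiv hf'pos hconc (hS0 i) (hSrow i)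
      hP.1 hQ.1 (Df_nonneg hfm.monotoneOn hP hQ) (sub_le_Df f P Q)

/-- monotonicity of D_f under bistochastic maps: if f is C¹ on
(0,1) with f' positive and 1/f' concave on (0,1), then for every bistochastic
matrix S and all P,Q ∈ Δ_N, D_f(SP,SQ) ≤ D_f(P,Q). -/
theorem stmt_19 {N : ℕ} (f f' : ℝ → ℝ)
    (hfc : ContinuousOn f (Set.Icc 0 1))
    (hfm : StrictMonoOn f (Set.Icc 0 1))
    (hf0 : f 0 = 0) (hf1 : f 1 = 1)
    (hderiv : ∀ x ∈ Set.Ioo (0 : ℝ) 1, HasDerivAt f (f' x) x)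
    (hf'cont : ContinuousOn f' (Set.Ioo 0 1))
    (hf'pos : ∀ x ∈ Set.Ioo (0 : ℝ) 1, 0 < f' x)
    (hconc : ConcaveOn ℝ (Set.Ioo (0 : ℝ) 1) (fun x => 1 / f' x))
    (S : Matrix (Fin (N + 1)) (Fin (N + 1)) ℝ)
    (hS0 : ∀ i j, 0 ≤ S i j)
    (hSrow : ∀ i, ∑ j, S i j = 1)
    (hScol : ∀ j, ∑ i, S i j = 1)
    (P Q : Fin (N + 1) → ℝ) (hP : memSimplex P) (hQ : memSimplex Q) :
    Df f (S.mulVec P) (S.mulVec Q) ≤ Df f P Q :=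
  stmt_19_general f f' hfc hfm hf0 hf1 hderiv hf'pos hconc S hS0 hSrow P Q hP hQ
end
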